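/- Let L be the Laplacian of a connected weighted digraph on N nodes with reachable node i_R. Then there exists a positive diagonal matrix D such that D L + L^T D + 2 D e_{i_R} e_{i_R}^T > 2 I (in the positive-definite order). -/

import Mathlib

/-!
Put `M = L + e_{iR} e_{iR}ᵀ`, a Z-matrix. With `ρ i` the distance from `i` to `iR`, `S` the
total edge weight and `θ S` below every edge weight, the bounded potential
`w i = S + 2 - θ ^ ρ i` is positive with `M w > 0`. A Neumann series for the nonnegative matrix
`1 - s⁻¹ M diag w`, whose row sums are below `1`, gives `v > 0` with `vᵀ M > 0`. Then
`A = D M + Mᵀ D` with `D = diag (v / w)` is a symmetric Z-matrix with `A w = D M w + Mᵀ v > 0`,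
hence so is `c A - 2 I` for large `c`; after the congruence by `diag w` such a matrix is strictly
diagonally dominant, so positive definite by Gershgorin's theorem.
-/

open Matrix Finset Filter Topology

theorem exists_pos_le_one_forall_mul_lt {κ : Type*} [Finite κ] (f : κ → ℝ) (S : ℝ) :
    ∃ θ : ℝ, 0 < θ ∧ θ ≤ 1 ∧ ∀ k, 0 < f k → θ * S < f k := by
  have hS : Tendsto (fun θ : ℝ => θ * S) (𝓝 0) (𝓝 0) := by
    simpa using (tendsto_id (x := 𝓝 (0 : ℝ))).mul_const S
  have hθ : ∀ᶠ θ in 𝓝 (0 : ℝ), θ ≤ 1 ∧ ∀ k, 0 < f k → θ * S < f k := by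
    refine (eventually_le_nhds one_pos).and (eventually_all.2 fun k => ?_)
    by_cases hk : 0 < f k
    · exact (hS.eventually_lt_const hk).mono fun θ h _ => h
    · exact Eventually.of_forall fun θ h => absurd h hk
  obtain ⟨θ, ⟨hθ1, hθf⟩, hθ0⟩ := ((hθ.filter_mono nhdsWithin_le_nhds).and
    (self_mem_nhdsWithin : Set.Ioi (0 : ℝ) ∈ 𝓝[>] 0)).exists
  exact ⟨θ, hθ0, hθ1, hθf⟩

namespace Relation

variable {α : Type*} {r : α → α → Prop} {a b : α}

/-- `ReachesWithin r b n a`: some path of at most `n` `r`-steps leads from `a` to `b`. -/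
def ReachesWithin (r : α → α → Prop) (b : α) : ℕ → α → Prop
  | 0, a => a = b
  | n + 1, a => a = b ∨ ∃ c, r a c ∧ ReachesWithin r b n c

theorem ReflTransGen.exists_reachesWithin (h : ReflTransGen r a b) :
    ∃ n, ReachesWithin r b n a := by
  induction h using ReflTransGen.head_induction_on with
  | refl => exact ⟨0, rfl⟩
  | head hac _ ih =>
    obtain ⟨n, hn⟩ := ih
    exact ⟨n + 1, .inr ⟨_, hac, hn⟩⟩

theorem exists_rank_of_forall_reflTransGen (h : ∀ a, ReflTransGen r a b) :
    ∃ ρ : α → ℕ, ∀ a ≠ b, ∃ c, r a c ∧ ρ c < ρ a := by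
  classical
  have hex a := (h a).exists_reachesWithin
  refine ⟨fun a => Nat.find (hex a), fun a hab => ?_⟩
  have hspec := Nat.find_spec (hex a)
  rcases hn : Nat.find (hex a) with _ | n <;> rw [hn] at hspec
  · exact absurd hspec hab
  · obtain hab' | ⟨c, hac, hc⟩ := hspec
    · exact absurd hab' hab
    · refine ⟨c, hac, ?_⟩
      show Nat.find _ < Nat.find _
      exact hn ▸ Nat.lt_succ_of_le (Nat.find_min' _ hc)

end Relation

namespace Matrix

variable {ι : Type*} [Fintype ι] [DecidableEq ι]

theorem posDef_of_isSymm_of_sum_pos {A : Matrix ι ι ℝ} (hA : A.IsSymm)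
    (hoff : Pairwise fun i j => A i j ≤ 0) (hrow : ∀ i, 0 < ∑ j, A i j) : A.PosDef := by
  have hH : A.IsHermitian := by simpa [IsHermitian, IsSymm] using hA
  refine hH.posDef_iff_eigenvalues_pos.2 fun k => ?_
  have hk : Module.End.HasEigenvalue (toLin' A) (hH.eigenvalues k) := by
    rw [Module.End.hasEigenvalue_iff_mem_spectrum, spectrum_toLin']
    exact hH.eigenvalues_mem_spectrum_real k
  obtain ⟨i, hi⟩ := eigenvalue_mem_ball hk
  have habs : ∑ j ∈ univ.erase i, ‖A i j‖ = -∑ j ∈ univ.erase i, A i j := by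
    rw [← sum_neg_distrib]
    exact sum_congr rfl fun j hj => by
      rw [Real.norm_eq_abs, abs_of_nonpos (hoff (ne_of_mem_erase hj).symm)]
  rw [Metric.mem_closedBall, Real.dist_eq, habs] at hi
  have := add_sum_erase univ (A i) (mem_univ i)
  linarith [hrow i, neg_abs_le (hH.eigenvalues k - A i i)]

theorem posDef_of_isSymm_of_mulVec_pos {A : Matrix ι ι ℝ} (hA : A.IsSymm)
    (hoff : Pairwise fun i j => A i j ≤ 0) {w : ι → ℝ} (hw : ∀ i, 0 < w i)
    (hAw : ∀ i, 0 < (A *ᵥ w) i) : A.PosDef := by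
  have hU : IsUnit (diagonal w) := isUnit_diagonal.2 (Pi.isUnit_iff.2 fun i => (hw i).ne'.isUnit)
  have hstar : star (diagonal w) = diagonal w := by
    rw [star_eq_conjTranspose, diagonal_conjTranspose, star_trivial]
  refine (IsUnit.posDef_star_left_conjugate_iff hU).1 ?_
  rw [hstar]
  refine posDef_of_isSymm_of_sum_pos ?_ ?_ ?_
  · simp [IsSymm, transpose_mul, hA.eq, mul_assoc]
  · intro i j hij
    simpa [diagonal_mul, mul_diagonal] using
      mul_nonpos_of_nonpos_of_nonneg (mul_nonpos_of_nonneg_of_nonpos (hw i).le (hoff hij)) (hw j).le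
  · intro i
    simpa [diagonal_mul, mul_diagonal, mulVec, dotProduct, mul_sum, mul_assoc] using
      mul_pos (hw i) (hAw i)

open scoped Matrix.Norms.Operator in
theorem exists_nonneg_mul_one_sub_eq_one {C : Matrix ι ι ℝ} (hC : ∀ i j, 0 ≤ C i j)
    (hrow : ∀ i, ∑ j, C i j < 1) :
    ∃ N : Matrix ι ι ℝ, (∀ i j, 0 ≤ N i j) ∧ N * (1 - C) = 1 := by
  have hnorm : ‖C‖ < 1 := by
    rw [linfty_opNorm_def, ← NNReal.coe_one, NNReal.coe_lt_coe, Finset.sup_lt_iff one_pos]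
    intro i _
    rw [← NNReal.coe_lt_coe]
    simpa [Real.norm_eq_abs, abs_of_nonneg (hC i _)] using hrow i
  refine ⟨∑' k, C ^ k, fun i j => ?_, geom_series_mul_neg C hnorm⟩
  have hs := summable_geometric_of_norm_lt_one hnorm
  have h1 : (∑' k, C ^ k) i = ∑' k, (C ^ k) i := tsum_apply hs
  rw [h1, tsum_apply (Pi.summable.1 hs i)]
  exact tsum_nonneg fun k => pow_apply_nonneg hC k i j

theorem exists_pos_vecMul_pos_of_sum_pos {A : Matrix ι ι ℝ}
    (hoff : Pairwise fun i j => A i j ≤ 0) (hrow : ∀ i, 0 < ∑ j, A i j) :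
    ∃ v : ι → ℝ, (∀ i, 0 < v i) ∧ ∀ j, 0 < (v ᵥ* A) j := by
  set s : ℝ := 1 + ∑ i, |A i i|
  have hs : 0 < s := by positivity
  have hdiag : ∀ i, A i i < s := fun i => by
    have := single_le_sum (fun j _ => abs_nonneg (A j j)) (mem_univ i)
    linarith [le_abs_self (A i i)]
  set C := 1 - s⁻¹ • A
  have hC : ∀ i j, 0 ≤ C i j := by
    intro i j
    rcases eq_or_ne i j with rfl | hij
    · simpa [C, sub_nonneg, inv_mul_le_one₀ hs] using (hdiag i).le
    · simpa [C, one_apply_ne hij] using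
        mul_nonpos_of_nonneg_of_nonpos (inv_nonneg.2 hs.le) (hoff hij)
  have hCrow : ∀ i, ∑ j, C i j < 1 := fun i => by
    simpa [C, sum_sub_distrib, ← mul_sum, one_apply] using mul_pos (inv_pos.2 hs) (hrow i)
  obtain ⟨N, hN0, hN⟩ := exists_nonneg_mul_one_sub_eq_one hC hCrow
  have hNA : N * A = s • 1 := by
    rw [show A = s • (1 - C) by simp [C, smul_smul, hs.ne'], mul_smul_comm, hN]
  have hNdiag : ∀ j, 1 ≤ N j j := fun j => by
    have hNC : N = 1 + N * C := by rw [mul_sub, mul_one] at hN; rw [← hN]; abel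
    rw [hNC, add_apply, one_apply_eq, mul_apply, le_add_iff_nonneg_right]
    exact sum_nonneg fun k _ => mul_nonneg (hN0 j k) (hC k j)
  refine ⟨1 ᵥ* N, fun j => ?_, fun j => ?_⟩
  · have := single_le_sum (fun i _ => hN0 i j) (mem_univ j)
    simp only [vecMul, dotProduct, Pi.one_apply, one_mul]
    linarith [hNdiag j]
  · simpa [vecMul_vecMul, hNA, vecMul_smul] using hs

theorem exists_pos_vecMul_pos {A : Matrix ι ι ℝ} (hoff : Pairwise fun i j => A i j ≤ 0)
    {w : ι → ℝ} (hw : ∀ i, 0 < w i) (hAw : ∀ i, 0 < (A *ᵥ w) i) :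
    ∃ v : ι → ℝ, (∀ i, 0 < v i) ∧ ∀ j, 0 < (v ᵥ* A) j := by
  obtain ⟨v, hv, hvA⟩ := exists_pos_vecMul_pos_of_sum_pos (A := A * diagonal w)
    (fun i j hij => by simpa using mul_nonpos_of_nonpos_of_nonneg (hoff hij) (hw j).le)
    (fun i => by simpa [mulVec, dotProduct] using hAw i)
  refine ⟨v, hv, fun j => pos_of_mul_pos_left ?_ (hw j).le⟩
  simpa [← vecMul_vecMul, vecMul_diagonal] using hvA j

theorem exists_posDef_diagonal_mul_add_transpose_mul_diagonal_sub {M : Matrix ι ι ℝ}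
    (hoff : Pairwise fun i j => M i j ≤ 0) {w : ι → ℝ} (hw : ∀ i, 0 < w i)
    (hMw : ∀ i, 0 < (M *ᵥ w) i) (t : ℝ) :
    ∃ d : ι → ℝ, (∀ i, 0 < d i) ∧
      (diagonal d * M + Mᵀ * diagonal d - t • 1).PosDef := by
  obtain ⟨v, hv, hvM⟩ := exists_pos_vecMul_pos hoff hw hMw
  set d₀ : ι → ℝ := v / w
  have hd₀ : ∀ i, 0 < d₀ i := fun i => div_pos (hv i) (hw i)
  set A := diagonal d₀ * M + Mᵀ * diagonal d₀
  have hAw : ∀ i, 0 < (A *ᵥ w) i := fun i => by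
    have hd₀w : diagonal d₀ *ᵥ w = v := by
      ext j; simp [d₀, mulVec_diagonal, div_mul_cancel₀ _ (hw j).ne']
    rw [add_mulVec, ← mulVec_mulVec w (diagonal d₀), ← mulVec_mulVec w Mᵀ, hd₀w,
      mulVec_transpose, Pi.add_apply, mulVec_diagonal]
    exact add_pos (mul_pos (hd₀ i) (hMw i)) (hvM i)
  obtain ⟨c, hc, hcA⟩ : ∃ c : ℝ, 0 < c ∧ ∀ i, t * w i < c * (A *ᵥ w) i :=
    ((eventually_gt_atTop 0).and (eventually_all.2 fun i =>
      (tendsto_id.atTop_mul_const (hAw i)).eventually_gt_atTop (t * w i))).exists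
  refine ⟨c • d₀, fun i => mul_pos hc (hd₀ i), ?_⟩
  rw [diagonal_smul, smul_mul_assoc, mul_smul_comm, ← smul_add]
  change (c • A - t • 1).PosDef
  refine posDef_of_isSymm_of_mulVec_pos ?_ (fun i j hij => ?_) hw fun i => ?_
  · have hA : Aᵀ = A := by simp [A, transpose_add, transpose_mul, add_comm]
    simp [IsSymm, hA]
  · have h1 := mul_nonpos_of_nonneg_of_nonpos (hd₀ i).le (hoff hij)
    have h2 := mul_nonpos_of_nonpos_of_nonneg (hoff hij.symm) (hd₀ j).le
    simpa [A, one_apply_ne hij, diagonal_mul, mul_diagonal, mul_add] using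
      mul_nonpos_of_nonneg_of_nonpos hc.le (add_nonpos h1 h2)
  · simp only [sub_mulVec, smul_mulVec, one_mulVec, Pi.sub_apply, Pi.smul_apply, smul_eq_mul]
    linarith [hcA i]

def laplacian (a : ι → ι → ℝ) : Matrix ι ι ℝ := diagonal (fun i => ∑ j, a i j) - of a

theorem laplacian_apply_of_ne (a : ι → ι → ℝ) {i j : ι} (hij : i ≠ j) :
    laplacian a i j = -a i j := by
  simp [laplacian, hij]

theorem laplacian_mulVec_apply (a : ι → ι → ℝ) (w : ι → ℝ) (i : ι) :
    (laplacian a *ᵥ w) i = ∑ j, a i j * (w i - w j) := by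
  rw [laplacian, sub_mulVec, Pi.sub_apply, mulVec_diagonal]
  simp [mulVec, dotProduct, mul_sub, sum_mul]

theorem exists_pos_laplacian_add_mulVec_pos {a : ι → ι → ℝ} (ha : ∀ i j, 0 ≤ a i j)
    {b : ι} {ρ : ι → ℕ} (hρ : ∀ i ≠ b, ∃ j, 0 < a i j ∧ ρ j < ρ i) :
    ∃ w : ι → ℝ, (∀ i, 0 < w i) ∧
      ∀ i, 0 < ((laplacian a + diagonal (Pi.single b 1)) *ᵥ w) i := by
  set S := ∑ i, ∑ j, a i j
  have hrow i : ∑ j, a i j ≤ S :=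
    single_le_sum (f := fun i => ∑ j, a i j) (fun i _ => sum_nonneg fun j _ => ha i j)
      (mem_univ i)
  have hS : 0 ≤ S := (sum_nonneg fun j _ => ha b j).trans (hrow b)
  obtain ⟨θ, hθ0, hθ1, hθa⟩ := exists_pos_le_one_forall_mul_lt (fun p : ι × ι => a p.1 p.2) S
  have hpow n : 0 < θ ^ n ∧ θ ^ n ≤ 1 := ⟨pow_pos hθ0 n, pow_le_one₀ hθ0.le hθ1⟩
  refine ⟨fun i => S + 2 - θ ^ ρ i, fun i => by linarith [hpow (ρ i)], fun i => ?_⟩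
  rw [add_mulVec, Pi.add_apply, laplacian_mulVec_apply, mulVec_diagonal]
  simp only [sub_sub_sub_cancel_left]
  by_cases hi : i = b
  · subst hi
    have hsum : -S ≤ ∑ j, a i j * (θ ^ ρ j - θ ^ ρ i) := by
      refine (neg_le_neg (hrow i)).trans ?_
      rw [← sum_neg_distrib]
      exact sum_le_sum fun j _ => by nlinarith [ha i j, hpow (ρ j), hpow (ρ i)]
    rw [Pi.single_eq_same, one_mul]
    linarith [hpow (ρ i)]
  · obtain ⟨j₀, hj₀, hρj₀⟩ := hρ i hi
    obtain ⟨m, hm⟩ := Nat.exists_eq_add_of_lt hρj₀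
    set q := θ ^ (ρ j₀ + m)
    have hρi : θ ^ ρ i = θ * q := by rw [hm, pow_succ, mul_comm]
    have hq : q ≤ θ ^ ρ j₀ := pow_le_pow_of_le_one hθ0.le hθ1 (Nat.le_add_right _ _)
    -- Every term is at least `-a i j * θ q`; the edge to `j₀` beats this by `a i j₀ * q`.
    have hterm j : 0 ≤ a i j * (θ ^ ρ j - θ ^ ρ i) + a i j * (θ * q) := by
      nlinarith [ha i j, hpow (ρ j)]
    have hsum : a i j₀ * q ≤ ∑ j, (a i j * (θ ^ ρ j - θ ^ ρ i) + a i j * (θ * q)) := by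
      refine le_trans ?_ (single_le_sum (fun j _ => hterm j) (mem_univ j₀))
      nlinarith [ha i j₀]
    rw [sum_add_distrib, ← sum_mul] at hsum
    rw [Pi.single_eq_of_ne hi, zero_mul, add_zero]
    have hgap : 0 < q * (a i j₀ - θ * S) := mul_pos (hpow _).1 (sub_pos.2 (hθa (i, j₀) hj₀))
    have hrowq := mul_le_mul_of_nonneg_right (hrow i) (mul_pos hθ0 (hpow (ρ j₀ + m)).1).le
    linarith

end Matrix

theorem stmt17_general {N : ℕ} (a : Fin N → Fin N → ℝ)
    (hnn : ∀ i j, 0 ≤ a i j)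
    (L : Matrix (Fin N) (Fin N) ℝ)
    (hL : ∀ i j, L i j = (if i = j then ∑ k, a i k else 0) - a i j)
    (iR : Fin N)
    (hconn : ∀ j, Relation.ReflTransGen (fun u v => 0 < a u v) j iR) :
    ∃ d : Fin N → ℝ, (∀ i, 0 < d i) ∧
      (Matrix.diagonal d * L + Lᵀ * Matrix.diagonal d +
        (2 : ℝ) • (Matrix.diagonal d * Matrix.single iR iR 1) -
        (2 : ℝ) • (1 : Matrix (Fin N) (Fin N) ℝ)).PosDef := by
  have hL' : L = laplacian a := by ext i j; simp [hL, laplacian, diagonal_apply]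
  set M := laplacian a + diagonal (Pi.single iR 1)
  have hM : Pairwise fun i j => M i j ≤ 0 := fun i j hij => by
    simpa [M, laplacian_apply_of_ne a hij, hij] using hnn i j
  obtain ⟨ρ, hρ⟩ := Relation.exists_rank_of_forall_reflTransGen hconn
  obtain ⟨w, hw, hMw⟩ := exists_pos_laplacian_add_mulVec_pos hnn hρ
  obtain ⟨d, hd, hpd⟩ := exists_posDef_diagonal_mul_add_transpose_mul_diagonal_sub hM hw hMw 2
  refine ⟨d, hd, ?_⟩
  convert hpd using 2
  rw [hL', ← diagonal_single, transpose_add, diagonal_transpose, mul_add, add_mul,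
    diagonal_mul_diagonal, diagonal_mul_diagonal, two_smul]
  simp only [mul_comm (d _)]
  abel

/-- For the Laplacian L of a connected weighted digraph with reachable
node iR, there is a positive diagonal D with DL + LᵀD + 2 D e_{iR} e_{iR}ᵀ > 2I. -/
theorem stmt17 {N : ℕ} (a : Fin N → Fin N → ℝ)
    (hnn : ∀ i j, 0 ≤ a i j) (hdiag : ∀ i, a i i = 0)
    (L : Matrix (Fin N) (Fin N) ℝ)
    (hL : ∀ i j, L i j = (if i = j then ∑ k, a i k else 0) - a i j)
    (iR : Fin N)
    (hconn : ∀ j, Relation.ReflTransGen (fun u v => 0 < a u v) j iR) :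
    ∃ d : Fin N → ℝ, (∀ i, 0 < d i) ∧
      (Matrix.diagonal d * L + Lᵀ * Matrix.diagonal d +
        (2 : ℝ) • (Matrix.diagonal d * Matrix.single iR iR 1) -
        (2 : ℝ) • (1 : Matrix (Fin N) (Fin N) ℝ)).PosDef :=
  stmt17_general a hnn L hL iR hconn
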